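/- Let ψ = v v† be a pure state on n qubits and P ∈ P_n. Then Σ_{Q ∈ P_n, PQ = QP} (p⋆p)_ψ(Q) = (1 + tr(Pψ)⁴)/2; that is, the probability under the Bell-difference (convolved Pauli) distribution that a sampled Pauli commutes with P equals (1 + tr(Pψ)⁴)/2. -/

import Mathlib

/-!
Pauli operators are Hermitian involutions that pairwise commute or anticommute, so the indicator
of `P_s P_t = P_t P_s` is `(1 + χ(s,t))/2` with `χ = commSign n` the commutation sign, and it
suffices to show `∑_t χ(s,t) (p⋆p)_ψ(t) = tr(P_s ψ)⁴` for every `s`; the total mass `1` is the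
case `s = 0`. Since the Pauli operators are an orthogonal basis,
`∑_t tr(P_t A) tr(P_t B) = 2ⁿ tr(AB)`, and weighting by `χ(s,t)` replaces `A` by `P_s A P_s`.
Applying this twice, and collapsing `ψ M ψ = tr(Mψ) ψ` for the rank-one `ψ`, evaluates the
double sum.
-/
open Matrix
open scoped Classical

noncomputable section

/-- The four 2×2 Pauli matrices: `0 ↦ I`, `1 ↦ X`, `2 ↦ Y`, `3 ↦ Z`. -/
def pauli1 : Fin 4 → Matrix (Fin 2) (Fin 2) ℂ
  | 0 => !![1, 0; 0, 1]
  | 1 => !![0, 1; 1, 0]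
  | 2 => !![0, -Complex.I; Complex.I, 0]
  | 3 => !![1, 0; 0, -1]

/-- The `n`-qubit Pauli operator associated to the string `s : Fin n → Fin 4`. -/
def PauliOp (n : ℕ) (s : Fin n → Fin 4) :
    Matrix (Fin n → Fin 2) (Fin n → Fin 2) ℂ :=
  Matrix.of fun i j => ∏ a, pauli1 (s a) (i a) (j a)

/-- The Pauli distribution of a state `ψ`: `p_ψ(P) = tr(Pψ)² / 2^n`. -/
def pDist (n : ℕ) (ψ : Matrix (Fin n → Fin 2) (Fin n → Fin 2) ℂ)
    (s : Fin n → Fin 4) : ℝ :=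
  ((Matrix.trace (PauliOp n s * ψ)).re) ^ 2 / 2 ^ n

/-- The self-convolution of the Pauli distribution:
`(p⋆p)_ψ(P) = ∑_{Q ∈ 𝒫_n} p_ψ(Q) · |tr(QPψ)|² / 2^n`. -/
def pConv (n : ℕ) (ψ : Matrix (Fin n → Fin 2) (Fin n → Fin 2) ℂ)
    (s : Fin n → Fin 4) : ℝ :=
  ∑ s' : Fin n → Fin 4,
    pDist n ψ s' *
      Complex.normSq (Matrix.trace (PauliOp n s' * PauliOp n s * ψ)) / 2 ^ n

namespace Matrix

variable {ι m R : Type*} [Fintype ι] [CommSemiring R]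

def piKron (M : ι → Matrix m m R) : Matrix (ι → m) (ι → m) R :=
  of fun i j => ∏ a, M a (i a) (j a)

lemma piKron_apply (M : ι → Matrix m m R) (i j : ι → m) :
    piKron M i j = ∏ a, M a (i a) (j a) := rfl

lemma piKron_mul [DecidableEq ι] [Fintype m] (M N : ι → Matrix m m R) :
    piKron M * piKron N = piKron fun a => M a * N a := by
  ext i j
  simp only [piKron_apply, mul_apply, ← Finset.prod_mul_distrib]
  exact (Fintype.prod_sum fun a x => M a (i a) x * N a x (j a)).symm

lemma piKron_one [DecidableEq m] : piKron (fun _ : ι => (1 : Matrix m m R)) = 1 := by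
  ext i j
  simp only [piKron_apply, one_apply, Fintype.prod_ite_zero, Finset.prod_const_one, funext_iff]

lemma piKron_smul (c : ι → R) (M : ι → Matrix m m R) :
    piKron (fun a => c a • M a) = (∏ a, c a) • piKron M := by
  ext i j
  simp only [piKron_apply, smul_apply, smul_eq_mul, Finset.prod_mul_distrib]

lemma piKron_conjTranspose [StarRing R] (M : ι → Matrix m m R) :
    (piKron M)ᴴ = piKron fun a => (M a)ᴴ := by
  ext i j
  simp only [conjTranspose_apply, piKron_apply, star_prod]

end Matrix

lemma pauli1_zero : pauli1 0 = 1 := by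
  ext i j
  fin_cases i <;> fin_cases j <;> rfl

lemma pauli1_mul_self (c : Fin 4) : pauli1 c * pauli1 c = 1 := by
  fin_cases c <;> ext i j <;> fin_cases i <;> fin_cases j <;>
    simp [pauli1, mul_apply, Fin.sum_univ_two]

lemma pauli1_conjTranspose (c : Fin 4) : (pauli1 c)ᴴ = pauli1 c := by
  fin_cases c <;> ext i j <;> fin_cases i <;> fin_cases j <;> simp [pauli1]

lemma pauli1_mul_comm (c c' : Fin 4) :
    pauli1 c * pauli1 c' =
      (if c = 0 ∨ c' = 0 ∨ c = c' then 1 else -1 : ℂ) • (pauli1 c' * pauli1 c) := by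
  fin_cases c <;> fin_cases c' <;> ext i j <;> fin_cases i <;> fin_cases j <;>
    simp [pauli1, mul_apply, Fin.sum_univ_two]

lemma sum_pauli1_apply_mul_apply (a b e f : Fin 2) :
    ∑ c, pauli1 c a b * pauli1 c e f = if a = f ∧ b = e then 2 else 0 := by
  fin_cases a <;> fin_cases b <;> fin_cases e <;> fin_cases f <;>
    simp [Fin.sum_univ_four, pauli1] <;> ring

section PauliOp

variable {n : ℕ}

lemma PauliOp_eq_piKron (s : Fin n → Fin 4) : PauliOp n s = piKron fun a => pauli1 (s a) := rfl

lemma PauliOp_zero : PauliOp n 0 = 1 := by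
  simp only [PauliOp_eq_piKron, Pi.zero_apply, pauli1_zero, piKron_one]

lemma PauliOp_mul_self (s : Fin n → Fin 4) : PauliOp n s * PauliOp n s = 1 := by
  simp only [PauliOp_eq_piKron, piKron_mul, pauli1_mul_self, piKron_one]

lemma PauliOp_isHermitian (s : Fin n → Fin 4) : (PauliOp n s).IsHermitian := by
  simp only [IsHermitian, PauliOp_eq_piKron, piKron_conjTranspose, pauli1_conjTranspose]

lemma PauliOp_mul_comm_or_anticomm (s t : Fin n → Fin 4) :
    PauliOp n s * PauliOp n t = PauliOp n t * PauliOp n s ∨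
      PauliOp n s * PauliOp n t = -(PauliOp n t * PauliOp n s) := by
  let ε a : ℂ := if s a = 0 ∨ t a = 0 ∨ s a = t a then 1 else -1
  have hmul : PauliOp n s * PauliOp n t = (∏ a, ε a) • (PauliOp n t * PauliOp n s) := by
    simp only [PauliOp_eq_piKron, piKron_mul, ← piKron_smul]
    exact congrArg piKron (funext fun a => pauli1_mul_comm (s a) (t a))
  have hsign : (∏ a, ε a) = 1 ∨ (∏ a, ε a) = -1 :=
    Finset.prod_induction ε (fun x => x = 1 ∨ x = -1)
      (by rintro _ _ (rfl | rfl) (rfl | rfl) <;> norm_num) (Or.inl rfl)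
      (fun a _ => by unfold ε; split_ifs <;> simp)
  rcases hsign with h | h <;> rw [h] at hmul
  · exact Or.inl (by rwa [one_smul] at hmul)
  · exact Or.inr (by rwa [neg_one_smul] at hmul)

lemma sum_PauliOp_apply_mul_apply (i j k l : Fin n → Fin 2) :
    ∑ s, PauliOp n s i j * PauliOp n s k l = if i = l ∧ j = k then 2 ^ n else 0 := by
  simp only [PauliOp_eq_piKron, piKron_apply, ← Finset.prod_mul_distrib]
  rw [← Fintype.prod_sum fun a c => pauli1 c (i a) (j a) * pauli1 c (k a) (l a)]
  simp only [sum_pauli1_apply_mul_apply, Fintype.prod_ite_zero, Finset.prod_const,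
    Finset.card_univ, Fintype.card_fin, funext_iff, forall_and]

end PauliOp

def commSign (n : ℕ) (s t : Fin n → Fin 4) : ℂ :=
  if PauliOp n s * PauliOp n t = PauliOp n t * PauliOp n s then 1 else -1

section commSign

variable {n : ℕ}

lemma commSign_comm (s t : Fin n → Fin 4) : commSign n s t = commSign n t s := by
  simp only [commSign, eq_comm]

lemma commSign_zero_left (t : Fin n → Fin 4) : commSign n 0 t = 1 := by
  simp [commSign, PauliOp_zero]

lemma PauliOp_mul_eq_commSign_smul (s t : Fin n → Fin 4) :
    PauliOp n s * PauliOp n t = commSign n s t • (PauliOp n t * PauliOp n s) := by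
  unfold commSign
  split_ifs with h
  · rw [h, one_smul]
  · rw [neg_one_smul]
    exact (PauliOp_mul_comm_or_anticomm s t).resolve_left h

lemma PauliOp_mul_mul_self (s t : Fin n → Fin 4) :
    PauliOp n s * PauliOp n t * PauliOp n s = commSign n s t • PauliOp n t := by
  rw [PauliOp_mul_eq_commSign_smul, smul_mul_assoc, Matrix.mul_assoc, PauliOp_mul_self,
    Matrix.mul_one]

end commSign

section PauliExpansion

variable {n : ℕ} (A B : Matrix (Fin n → Fin 2) (Fin n → Fin 2) ℂ)

lemma sum_trace_PauliOp_mul_smul :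
    ∑ t, trace (PauliOp n t * A) • PauliOp n t = (2 ^ n : ℂ) • A := by
  ext k l
  simp only [Matrix.sum_apply, Matrix.smul_apply, smul_eq_mul, trace, diag_apply, mul_apply]
  calc ∑ t, (∑ i, ∑ j, PauliOp n t i j * A j i) * PauliOp n t k l
      = ∑ i, ∑ j, A j i * ∑ t, PauliOp n t i j * PauliOp n t k l := by
        simp only [Finset.sum_mul, Finset.mul_sum]
        rw [Finset.sum_comm]
        refine Finset.sum_congr rfl fun i _ => ?_
        rw [Finset.sum_comm]
        exact Finset.sum_congr rfl fun j _ => Finset.sum_congr rfl fun t _ => by ring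
    _ = 2 ^ n * A k l := by
        simp [sum_PauliOp_apply_mul_apply, ite_and, mul_comm]

lemma sum_trace_mul_trace :
    ∑ t, trace (PauliOp n t * A) * trace (PauliOp n t * B) = 2 ^ n * trace (A * B) := by
  calc ∑ t, trace (PauliOp n t * A) * trace (PauliOp n t * B)
      = trace ((∑ t, trace (PauliOp n t * A) • PauliOp n t) * B) := by
        simp only [Matrix.sum_mul, trace_sum, smul_mul_assoc, trace_smul, smul_eq_mul]
    _ = 2 ^ n * trace (A * B) := by
        rw [sum_trace_PauliOp_mul_smul, smul_mul_assoc, trace_smul, smul_eq_mul]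

lemma sum_commSign_mul_trace_mul_trace (s : Fin n → Fin 4) :
    ∑ t, commSign n s t * trace (PauliOp n t * A) * trace (PauliOp n t * B) =
      2 ^ n * trace (PauliOp n s * A * PauliOp n s * B) := by
  have htwist (t : Fin n → Fin 4) :
      commSign n s t * trace (PauliOp n t * A) =
        trace (PauliOp n t * (PauliOp n s * A * PauliOp n s)) := by
    rw [← smul_eq_mul, ← trace_smul, ← smul_mul_assoc, ← PauliOp_mul_mul_self]
    simp only [Matrix.mul_assoc]
    rw [trace_mul_comm]
    simp only [Matrix.mul_assoc]
  simp only [htwist, sum_trace_mul_trace, Matrix.mul_assoc]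

end PauliExpansion

section RankOne

variable {m R : Type*} [Fintype m] [CommSemiring R]

lemma vecMulVec_mul_mul_vecMulVec (u w : m → R) (M : Matrix m m R) :
    vecMulVec u w * M * vecMulVec u w = trace (M * vecMulVec u w) • vecMulVec u w := by
  rw [vecMulVec_mul, vecMulVec_mul_vecMulVec, vecMulVec_smul, mul_vecMulVec, trace_vecMulVec,
    ← dotProduct_mulVec, dotProduct_comm]

lemma trace_mul_vecMulVec_mul_mul_vecMulVec (u w : m → R) (M : Matrix m m R) :
    trace (M * vecMulVec u w * M * vecMulVec u w) = trace (M * vecMulVec u w) ^ 2 := by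
  rw [Matrix.mul_assoc M, Matrix.mul_assoc M, vecMulVec_mul_mul_vecMulVec, Matrix.mul_smul,
    trace_smul, smul_eq_mul, sq]

end RankOne

section Hermitian

variable {m : Type*} [Fintype m] {A B C : Matrix m m ℂ}

lemma star_trace_mul_of_isHermitian (hA : A.IsHermitian) (hB : B.IsHermitian) :
    star (trace (A * B)) = trace (A * B) := by
  rw [← trace_conjTranspose, conjTranspose_mul, hA.eq, hB.eq, trace_mul_comm]

lemma star_trace_mul_mul_of_isHermitian (hA : A.IsHermitian) (hB : B.IsHermitian)
    (hC : C.IsHermitian) : star (trace (A * B * C)) = trace (B * A * C) := by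
  rw [← trace_conjTranspose, conjTranspose_mul, conjTranspose_mul, hA.eq, hB.eq, hC.eq]
  rw [trace_mul_comm, Matrix.mul_assoc]

end Hermitian

lemma ofReal_pConv {n : ℕ} {ψ : Matrix (Fin n → Fin 2) (Fin n → Fin 2) ℂ} (hψ : ψ.IsHermitian)
    (t : Fin n → Fin 4) :
    (pConv n ψ t : ℂ) = ∑ u, trace (PauliOp n u * ψ) ^ 2 / 2 ^ n *
      (trace (PauliOp n u * PauliOp n t * ψ) * trace (PauliOp n t * PauliOp n u * ψ)) / 2 ^ n := by
  have hre (u : Fin n → Fin 4) : ((trace (PauliOp n u * ψ)).re : ℂ) = trace (PauliOp n u * ψ) :=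
    Complex.conj_eq_iff_re.mp (star_trace_mul_of_isHermitian (PauliOp_isHermitian u) hψ)
  have hnormSq (u : Fin n → Fin 4) :
      (Complex.normSq (trace (PauliOp n u * PauliOp n t * ψ)) : ℂ) =
        trace (PauliOp n u * PauliOp n t * ψ) * trace (PauliOp n t * PauliOp n u * ψ) := by
    rw [Complex.normSq_eq_conj_mul_self, mul_comm]
    exact congrArg _ (star_trace_mul_mul_of_isHermitian (PauliOp_isHermitian u)
      (PauliOp_isHermitian t) hψ)
  simp only [pConv, pDist, Complex.ofReal_sum, Complex.ofReal_div, Complex.ofReal_mul,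
    Complex.ofReal_pow, hre, hnormSq]
  push_cast
  rfl

section PureState

variable {n : ℕ} (v : (Fin n → Fin 2) → ℂ)

lemma isHermitian_vecMulVec_star : (vecMulVec v (star v)).IsHermitian := by
  rw [IsHermitian, conjTranspose_vecMulVec, star_star]

lemma sum_commSign_mul_trace_sq (s : Fin n → Fin 4) :
    ∑ u, commSign n s u * trace (PauliOp n u * vecMulVec v (star v)) ^ 2 =
      2 ^ n * trace (PauliOp n s * vecMulVec v (star v)) ^ 2 := by
  simp only [sq, ← mul_assoc, sum_commSign_mul_trace_mul_trace]
  rw [trace_mul_vecMulVec_mul_mul_vecMulVec, sq, mul_assoc]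

lemma sum_commSign_mul_trace_mul_trace_vecMulVec (s u : Fin n → Fin 4) :
    ∑ t, commSign n s t * (trace (PauliOp n u * PauliOp n t * vecMulVec v (star v)) *
        trace (PauliOp n t * PauliOp n u * vecMulVec v (star v))) =
      2 ^ n * (commSign n s u * trace (PauliOp n s * vecMulVec v (star v)) ^ 2) := by
  have hcycle (t : Fin n → Fin 4) :
      trace (PauliOp n u * PauliOp n t * vecMulVec v (star v)) *
          trace (PauliOp n t * PauliOp n u * vecMulVec v (star v)) =
        trace (PauliOp n t * (vecMulVec v (star v) * PauliOp n u)) *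
          trace (PauliOp n t * (PauliOp n u * vecMulVec v (star v))) := by
    rw [trace_mul_cycle, trace_mul_comm, Matrix.mul_assoc (PauliOp n t)]
  have hconj : PauliOp n s * (vecMulVec v (star v) * PauliOp n u) * PauliOp n s *
      (PauliOp n u * vecMulVec v (star v)) =
        commSign n s u •
          (PauliOp n s * vecMulVec v (star v) * PauliOp n s * vecMulVec v (star v)) := by
    rw [commSign_comm, ← smul_mul_assoc, ← Matrix.mul_smul, ← PauliOp_mul_mul_self]
    simp only [Matrix.mul_assoc]
  simp only [hcycle, ← mul_assoc (commSign n s _)]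
  rw [sum_commSign_mul_trace_mul_trace, hconj, trace_smul, smul_eq_mul,
    trace_mul_vecMulVec_mul_mul_vecMulVec]

lemma sum_commSign_mul_pConv (s : Fin n → Fin 4) :
    ∑ t, commSign n s t * (pConv n (vecMulVec v (star v)) t : ℂ) =
      trace (PauliOp n s * vecMulVec v (star v)) ^ 4 := by
  have hd : (2 : ℂ) ^ n ≠ 0 := pow_ne_zero n two_ne_zero
  calc ∑ t, commSign n s t * (pConv n (vecMulVec v (star v)) t : ℂ)
      = ∑ u, trace (PauliOp n u * vecMulVec v (star v)) ^ 2 / 2 ^ n / 2 ^ n *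
          ∑ t, commSign n s t * (trace (PauliOp n u * PauliOp n t * vecMulVec v (star v)) *
            trace (PauliOp n t * PauliOp n u * vecMulVec v (star v))) := by
        simp only [ofReal_pConv (isHermitian_vecMulVec_star v), Finset.mul_sum]
        rw [Finset.sum_comm]
        exact Finset.sum_congr rfl fun u _ => Finset.sum_congr rfl fun t _ => by ring
    _ = trace (PauliOp n s * vecMulVec v (star v)) ^ 2 / 2 ^ n *
          ∑ u, commSign n s u * trace (PauliOp n u * vecMulVec v (star v)) ^ 2 := by
        simp only [sum_commSign_mul_trace_mul_trace_vecMulVec, Finset.mul_sum]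
        refine Finset.sum_congr rfl fun u _ => ?_
        field_simp
    _ = trace (PauliOp n s * vecMulVec v (star v)) ^ 4 := by
        rw [sum_commSign_mul_trace_sq]
        field_simp

end PureState

theorem pauli_conv_commuting_mass_general (n : ℕ)
    (v : (Fin n → Fin 2) → ℂ) (hv : star v ⬝ᵥ v = 1) (s : Fin n → Fin 4) :
    ∑ s' ∈ Finset.univ.filter (fun s' : Fin n → Fin 4 =>
        PauliOp n s * PauliOp n s' = PauliOp n s' * PauliOp n s),
      pConv n (Matrix.vecMulVec v (star v)) s' =
    (1 + ((Matrix.trace (PauliOp n s * Matrix.vecMulVec v (star v))).re) ^ 4) / 2 := by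
  have htotal := sum_commSign_mul_pConv v 0
  simp only [commSign_zero_left, one_mul, PauliOp_zero, trace_vecMulVec,
    dotProduct_comm v, hv, one_pow] at htotal
  have hsigned := sum_commSign_mul_pConv v s
  have hre := Complex.conj_eq_iff_re.mp
    (star_trace_mul_of_isHermitian (PauliOp_isHermitian s) (isHermitian_vecMulVec_star v))
  have hindicator (t : Fin n → Fin 4) :
      (if PauliOp n s * PauliOp n t = PauliOp n t * PauliOp n s then (1 : ℂ) else 0) =
        (1 + commSign n s t) / 2 := by
    rw [commSign]
    split_ifs <;> norm_num
  rw [← Complex.ofReal_inj, Complex.ofReal_sum, Finset.sum_filter]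
  calc ∑ t, (if PauliOp n s * PauliOp n t = PauliOp n t * PauliOp n s then
          (pConv n (vecMulVec v (star v)) t : ℂ) else 0)
      = ∑ t, (1 + commSign n s t) / 2 * (pConv n (vecMulVec v (star v)) t : ℂ) := by
        refine Finset.sum_congr rfl fun t _ => ?_
        rw [← hindicator, ite_mul, one_mul, zero_mul]
    _ = (1 + trace (PauliOp n s * vecMulVec v (star v)) ^ 4) / 2 := by
        simp only [add_div, add_mul, Finset.sum_add_distrib, div_mul_eq_mul_div, ← Finset.sum_div,
          one_mul, htotal, hsigned]
    _ = _ := by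
        push_cast
        rw [hre]

/-- For a pure state `ψ = v v†` and `P ∈ 𝒫_n`, the probability under the
Bell-difference (convolved Pauli) distribution that a sampled Pauli commutes with
`P` is `(1 + tr(Pψ)⁴)/2`. -/
theorem pauli_conv_commuting_mass (n : ℕ) (hn : 1 ≤ n)
    (v : (Fin n → Fin 2) → ℂ) (hv : star v ⬝ᵥ v = 1) (s : Fin n → Fin 4) :
    ∑ s' ∈ Finset.univ.filter (fun s' : Fin n → Fin 4 =>
        PauliOp n s * PauliOp n s' = PauliOp n s' * PauliOp n s),
      pConv n (Matrix.vecMulVec v (star v)) s' =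
    (1 + ((Matrix.trace (PauliOp n s * Matrix.vecMulVec v (star v))).re) ^ 4) / 2 :=
  pauli_conv_commuting_mass_general n v hv s
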